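/- arXiv:2004.05099 — 3 statements merged into one kernel-verified Lean document; each statement's English description precedes it below -/
import Mathlib

section
/- For a (2g+2)-element set B with distinguished subset U of size g+1, and the map T ↦ #(T∘U) on even subsets T (where T∘S = (T∖S)∪(S∖T) is symmetric difference), the number of equivalence classes (mod complementation) of even subsets T with #(T∘U) = g+1 equals binom(2g+2, g+1)/2. -/
/-- The setoid identifying, with its complement, each even-cardinality subset `T` of `B`
whose symmetric difference with a fixed subset `U` has cardinality `g+1`.
(Note that both conditions are preserved by complementation when `|B| = 2g+2`, `|U| = g+1`.) -/
def complSetoidSymmDiff (α : Type*) [Fintype α] [DecidableEq α] (U : Finset α) (g : ℕ) :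
    Setoid {T : Finset α // Even T.card ∧ (symmDiff T U).card = g + 1} where
  r T S := S.1 = T.1 ∨ S.1 = T.1ᶜ
  iseqv := by
    refine ⟨fun T => Or.inl rfl, ?_, ?_⟩
    · rintro T S (h | h)
      · exact Or.inl h.symm
      · exact Or.inr (by rw [h, compl_compl])
    · rintro T S R (h | h) (h' | h')
      · exact Or.inl (h'.trans h)
      · exact Or.inr (by rw [h', h])
      · exact Or.inr (h'.trans h)
      · exact Or.inl (by rw [h', h, compl_compl])

/-!
`T ↦ T ∆ U` is a bijection from the sets counted onto the `(g+1)`-subsets of `B`: evenness of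
`T` is automatic, since `#T ≡ #(T ∆ U) + #U = 2g+2 (mod 2)`. So there are `binom(2g+2, g+1)`
such `T`. Complementation preserves both conditions and has no fixed point, so every class has
exactly two elements.
-/

open Finset
open scoped symmDiff

theorem compl_symmDiff_left {β : Type*} [BooleanAlgebra β] (a b : β) :
    aᶜ ∆ b = (a ∆ b)ᶜ := by
  rw [← hnot_eq_compl, ← hnot_eq_compl, ← symmDiff_top, ← symmDiff_top, symmDiff_right_comm]

theorem Finset.card_symmDiff_add_two_mul_card_inter {α : Type*} [DecidableEq α]
    (s t : Finset α) : #(s ∆ t) + 2 * #(s ∩ t) = #s + #t := by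
  have hs := card_sdiff_add_card_inter s t
  have ht := card_sdiff_add_card_inter t s
  rw [inter_comm] at ht
  rw [symmDiff_def, sup_eq_union, card_union_of_disjoint disjoint_sdiff_sdiff]
  omega

theorem Setoid.card_eq_mul_card_quotient {X : Type*} [Finite X] (s : Setoid X) {n : ℕ}
    (hn : ∀ x, Nat.card {y // s x y} = n) : Nat.card X = n * Nat.card (Quotient s) := by
  have := Fintype.ofFinite (Quotient s)
  have hfiber (q : Quotient s) : Nat.card {y // Quotient.mk s y = q} = n := by
    induction q using Quotient.ind with
    | _ x => simpa only [Quotient.eq, Setoid.comm'] using hn x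
  rw [← Nat.card_congr (Equiv.sigmaFiberEquiv (Quotient.mk s)), Nat.card_sigma]
  simp only [hfiber, sum_const, card_univ, smul_eq_mul, Nat.card_eq_fintype_card, mul_comm]

theorem Setoid.card_eq_two_mul_card_quotient {X : Type*} [Finite X] (s : Setoid X) (f : X → X)
    (hf : ∀ x, f x ≠ x) (hs : ∀ x y, s x y ↔ y = x ∨ y = f x) :
    Nat.card X = 2 * Nat.card (Quotient s) :=
  s.card_eq_mul_card_quotient fun x => by
    rw [Nat.card_congr (Equiv.subtypeEquivRight (q := (· ∈ ({x, f x} : Set X))) (hs x)),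
      Nat.card_coe_set_eq, Set.ncard_pair (hf x).symm]

theorem Finset.natCard_even_card_symmDiff_eq_choose {α : Type*} [Fintype α] [DecidableEq α]
    (U : Finset α) {m : ℕ} (hm : Even (m + #U)) :
    Nat.card {T : Finset α // Even #T ∧ #(T ∆ U) = m} = (Fintype.card α).choose m := by
  rw [← Fintype.card_finset_len, ← Nat.card_eq_fintype_card]
  refine Nat.card_congr ((symmDiff_left_involutive U).toPerm.subtypeEquiv fun T => ?_)
  simp only [Function.Involutive.coe_toPerm, and_iff_right_iff_imp]
  rintro rfl
  have := card_symmDiff_add_two_mul_card_inter T U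
  rw [Nat.even_iff] at hm ⊢
  omega

/-- For a `(2g+2)`-element set `B` with a distinguished subset `U` of size `g+1`, the number
of equivalence classes, modulo complementation, of even-cardinality subsets `T ⊆ B` with
`#(T∘U) = g+1` equals `binom(2g+2, g+1)/2`.  (These classes correspond to the non-vanishing
theta constants in Mumford's characterization of the hyperelliptic locus.) -/
theorem card_even_subsets_symmDiff_mod_complement (g : ℕ) (α : Type*) [Fintype α]
    [DecidableEq α] (hα : Fintype.card α = 2 * g + 2) (U : Finset α) (hU : U.card = g + 1) :
    Nat.card (Quotient (complSetoidSymmDiff α U g)) = Nat.choose (2 * g + 2) (g + 1) / 2 := by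
  have : Nonempty α := Fintype.card_pos_iff.mp (by omega)
  have hcompl (T : Finset α) (hT : Even #T ∧ #(T ∆ U) = g + 1) :
      Even #Tᶜ ∧ #(Tᶜ ∆ U) = g + 1 := by
    have hle : #T ≤ 2 * g + 2 := hα ▸ card_le_univ T
    rw [compl_symmDiff_left, card_compl, card_compl, hα, hT.2, Nat.even_sub hle]
    exact ⟨by simpa [parity_simps] using hT.1, by omega⟩
  have htwice := (complSetoidSymmDiff α U g).card_eq_two_mul_card_quotient
    (fun T => ⟨T.1ᶜ, hcompl T.1 T.2⟩) (fun T h => compl_ne_self (congrArg Subtype.val h))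
    (fun T S => by simp only [Subtype.ext_iff]; rfl)
  rw [natCard_even_card_symmDiff_eq_choose U (by rw [hU]; exact ⟨g + 1, rfl⟩), hα] at htwice
  omega
end

section
/- Let V have basis X_σ indexed by σ, and for ε, ε' with ⟨ε,ε'⟩ = 0 let Q[ε,ε'] = Σ_σ (-1)^{⟨σ,ε'⟩} X_σ X_{σ+ε}. Then the set {Q[ε,ε'] : ⟨ε,ε'⟩ = 0} spans Sym^2 V, and the dimension of Sym^2 V is 2^{g-1}(2^g+1). -/
open MvPolynomial

/-- The sign `(-1)^⟨u,v⟩` attached to two vectors `u, v ∈ (ℤ/2)^g`. -/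
noncomputable def sgn {g : ℕ} (u v : Fin g → ZMod 2) : ℂ :=
  (-1 : ℂ) ^ (∑ i, (u i).val * (v i).val)

/-- The quadric `Q[ε,ε'] = Σ_σ (-1)^{⟨σ,ε'⟩} X_σ X_{σ+ε}`, an element of the space of
quadratic forms in the variables `X_σ`, `σ ∈ (ℤ/2)^g`. -/
noncomputable def Qform {g : ℕ} (ε ε' : Fin g → ZMod 2) :
    MvPolynomial (Fin g → ZMod 2) ℂ :=
  ∑ σ : Fin g → ZMod 2, sgn σ ε' • (X σ * X (σ + ε))

lemma neg_one_pow_congr_mod {m n : ℕ} (h : m % 2 = n % 2) : (-1:ℂ)^m = (-1)^n := by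
  conv_lhs => rw [← Nat.div_add_mod m 2]
  conv_rhs => rw [← Nat.div_add_mod n 2]
  rw [pow_add, pow_add, pow_mul, pow_mul, h]
  norm_num

lemma sgn_eq_prod {g : ℕ} (u v : Fin g → ZMod 2) :
    sgn u v = ∏ i, (-1:ℂ)^((u i).val * (v i).val) := by
  rw [sgn, Finset.prod_pow_eq_pow_sum]

lemma sgn_add_left {g : ℕ} (u w v : Fin g → ZMod 2) :
    sgn (u + w) v = sgn u v * sgn w v := by
  rw [sgn_eq_prod, sgn_eq_prod, sgn_eq_prod, ← Finset.prod_mul_distrib]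
  refine Finset.prod_congr rfl fun i _ => ?_
  rw [← pow_add]
  refine neg_one_pow_congr_mod ?_
  have : ∀ a b c : ZMod 2, ((a+b).val * c.val) % 2 = (a.val*c.val + b.val*c.val) % 2 := by decide
  exact this _ _ _

lemma sum_sgn {g : ℕ} (τ : Fin g → ZMod 2) :
    ∑ v : Fin g → ZMod 2, sgn τ v = if τ = 0 then (2^g : ℂ) else 0 := by
  simp only [sgn_eq_prod]
  rw [← Fintype.piFinset_univ,
    ← Finset.prod_univ_sum (fun _ : Fin g => (Finset.univ : Finset (ZMod 2)))
      (fun i x => (-1:ℂ)^((τ i).val * x.val))]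
  have h1 : ∀ i, ∑ x : ZMod 2, (-1:ℂ)^((τ i).val * x.val) =
      if τ i = 0 then 2 else 0 := by
    intro i
    have : ∀ a : ZMod 2, a = 0 ∨ a = 1 := by decide
    rcases this (τ i) with h | h <;>
      rw [h] <;> rw [show (Finset.univ : Finset (ZMod 2)) = {0, 1} from by decide] <;>
      simp [Finset.sum_insert, Finset.mem_singleton,
        show ZMod.val (1 : ZMod 2) = 1 from rfl]
  simp only [h1]
  by_cases h : τ = 0
  · simp [h, Finset.prod_const]
  · obtain ⟨i, hi⟩ : ∃ i, τ i ≠ 0 := by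
      by_contra hc
      push_neg at hc
      exact h (funext hc)
    rw [if_neg h]
    exact Finset.prod_eq_zero (Finset.mem_univ i) (by rw [if_neg hi])

lemma add_self' {g : ℕ} (v : Fin g → ZMod 2) : v + v = 0 :=
  funext fun i => (by decide : ∀ a : ZMod 2, a + a = 0) (v i)

lemma key {g : ℕ} (ε σ : Fin g → ZMod 2) :
    ∑ ε' : Fin g → ZMod 2, sgn σ ε' • Qform ε ε' =
      ((2:ℂ)^g) • (X σ * X (σ + ε)) := by
  simp only [Qform, Finset.smul_sum, smul_smul]
  rw [Finset.sum_comm]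
  have h1 : ∀ ρ : Fin g → ZMod 2,
      ∑ ε' : Fin g → ZMod 2, (sgn σ ε' * sgn ρ ε') • (X ρ * X (ρ + ε)) =
      (if σ + ρ = 0 then (2^g:ℂ) else 0) •
        (X ρ * X (ρ + ε) : MvPolynomial (Fin g → ZMod 2) ℂ) := by
    intro ρ
    rw [← Finset.sum_smul, ← sum_sgn]
    congr 1
    exact Finset.sum_congr rfl fun v _ => (sgn_add_left σ ρ v).symm
  simp only [h1]
  rw [Finset.sum_eq_single σ]
  · rw [if_pos (add_self' σ)]
  · intro ρ _ hρ
    rw [if_neg, zero_smul]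
    intro hc
    exact hρ (by
      calc ρ = σ + (σ + ρ) := by rw [← add_assoc, add_self', zero_add]
        _ = σ := by rw [hc, add_zero])
  · intro h; exact absurd (Finset.mem_univ σ) h

lemma Qform_eq_zero {g : ℕ} (ε ε' : Fin g → ZMod 2) (h : ∑ i, ε i * ε' i ≠ 0) :
    Qform ε ε' = 0 := by
  have hs : sgn ε ε' = -1 := by
    have hcast : ((∑ i, (ε i).val * (ε' i).val : ℕ) : ZMod 2) = ∑ i, ε i * ε' i := by
      push_cast
      refine Finset.sum_congr rfl fun i _ => ?_
      rw [ZMod.natCast_val, ZMod.natCast_val, ZMod.cast_id, ZMod.cast_id]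
    have h1 : (∑ i, (ε i).val * (ε' i).val) % 2 = 1 := by
      rcases Nat.mod_two_eq_zero_or_one (∑ i, (ε i).val * (ε' i).val) with h0 | h0
      · exfalso
        apply h
        rw [← hcast, ZMod.natCast_eq_zero_iff]
        exact Nat.dvd_of_mod_eq_zero h0
      · exact h0
    rw [sgn, neg_one_pow_congr_mod (n := 1) (by simpa using h1), pow_one]
  have h2 : Qform ε ε' = -Qform ε ε' := by
    nth_rewrite 1 [Qform]
    rw [← Equiv.sum_comp (Equiv.addRight ε) (fun ρ => sgn ρ ε' • (X ρ * X (ρ + ε)))]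
    simp only [Equiv.coe_addRight]
    rw [Qform, ← Finset.sum_neg_distrib]
    refine Finset.sum_congr rfl fun ρ _ => ?_
    rw [sgn_add_left, hs, mul_neg_one, neg_smul,
      show ρ + ε + ε = ρ from by rw [add_assoc, add_self', add_zero],
      mul_comm]
  have h3 : (2:ℂ) • Qform ε ε' = 0 := by
    rw [two_smul]
    nth_rewrite 1 [h2]
    simp
  exact (smul_eq_zero.mp h3).resolve_left two_ne_zero

lemma monomial_eq_X_mul_X {g : ℕ} (d : (Fin g → ZMod 2) →₀ ℕ) (hd : d.degree = 2) :
    ∃ σ τ : Fin g → ZMod 2, (monomial d 1 : MvPolynomial (Fin g → ZMod 2) ℂ) = X σ * X τ := by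
  classical
  have hcard : Multiset.card d.toMultiset = 2 := by
    rw [Finsupp.card_toMultiset]; exact hd
  obtain ⟨σ, τ, hst⟩ := Multiset.card_eq_two.mp hcard
  refine ⟨σ, τ, ?_⟩
  have hd2 : d = Finsupp.single σ 1 + Finsupp.single τ 1 := by
    have h := congrArg Multiset.toFinsupp hst
    rw [Finsupp.toMultiset_toFinsupp] at h
    rw [h, show ({σ, τ} : Multiset _) = {σ} + {τ} from rfl,
      Multiset.toFinsupp_add, Multiset.toFinsupp_singleton, Multiset.toFinsupp_singleton]
  rw [hd2, X, X, monomial_mul, one_mul]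

lemma Qform_mem {g : ℕ} (ε ε' : Fin g → ZMod 2) :
    Qform ε ε' ∈ homogeneousSubmodule (Fin g → ZMod 2) ℂ 2 := by
  apply Submodule.sum_mem
  intro σ _
  apply Submodule.smul_mem
  rw [mem_homogeneousSubmodule]
  exact (isHomogeneous_X ℂ σ).mul (isHomogeneous_X ℂ (σ + ε))

lemma X_mul_X_mem_span {g : ℕ} (σ τ : Fin g → ZMod 2) :
    X σ * X τ ∈ Submodule.span ℂ
      {p : MvPolynomial (Fin g → ZMod 2) ℂ |
        ∃ ε ε' : Fin g → ZMod 2, (∑ i, ε i * ε' i = 0) ∧ p = Qform ε ε'} := by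
  set S := {p : MvPolynomial (Fin g → ZMod 2) ℂ |
        ∃ ε ε' : Fin g → ZMod 2, (∑ i, ε i * ε' i = 0) ∧ p = Qform ε ε'}
  have h2 : ((2:ℂ)^g) • (X σ * X τ) ∈ Submodule.span ℂ S := by
    have hτ : σ + (σ + τ) = τ := by rw [← add_assoc, add_self', zero_add]
    rw [show X σ * X τ = X σ * X (σ + (σ + τ)) from by rw [hτ], ← key (σ + τ) σ]
    apply Submodule.sum_mem
    intro ε' _
    apply Submodule.smul_mem
    by_cases hp : ∑ i, (σ + τ) i * ε' i = 0
    · exact Submodule.subset_span ⟨σ + τ, ε', hp, rfl⟩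
    · rw [Qform_eq_zero _ _ hp]; exact Submodule.zero_mem _
  have := Submodule.smul_mem _ (((2:ℂ)^g)⁻¹) h2
  rwa [smul_smul, inv_mul_cancel₀ (pow_ne_zero g two_ne_zero), one_smul] at this

noncomputable def degTwoEquivSym (g : ℕ) :
    {d : (Fin g → ZMod 2) →₀ ℕ // d.degree = 2} ≃ Sym (Fin g → ZMod 2) 2 where
  toFun d := ⟨d.1.toMultiset, by rw [Finsupp.card_toMultiset]; exact d.2⟩
  invFun m := ⟨m.1.toFinsupp, by
    have h := Finsupp.card_toMultiset (Multiset.toFinsupp m.1)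
    rw [Multiset.toFinsupp_toMultiset] at h
    exact h.symm.trans m.2⟩
  left_inv d := Subtype.ext (Finsupp.toMultiset_toFinsupp d.1)
  right_inv m := Subtype.ext (Multiset.toFinsupp_toMultiset m.1)

lemma card_degTwo (g : ℕ) (hg : 1 ≤ g) [Fintype {d : (Fin g → ZMod 2) →₀ ℕ // d.degree = 2}] :
    Fintype.card {d : (Fin g → ZMod 2) →₀ ℕ // d.degree = 2} = 2 ^ (g - 1) * (2 ^ g + 1) := by
  rw [Fintype.card_congr (degTwoEquivSym g), Sym.card_sym_eq_choose]
  have hcard : Fintype.card (Fin g → ZMod 2) = 2 ^ g := by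
    rw [Fintype.card_fun]
    simp [ZMod.card]
  rw [hcard]
  obtain ⟨k, rfl⟩ : ∃ k, g = k + 1 := ⟨g - 1, (Nat.succ_pred_eq_of_pos hg).symm⟩
  rw [show 2 ^ (k+1) + 2 - 1 = 2 ^ (k+1) + 1 from by omega, Nat.choose_two_right,
    show 2 ^ (k+1) + 1 - 1 = 2 ^ (k+1) from by omega]
  rw [show (2:ℕ) ^ (k+1) = 2 ^ k * 2 from pow_succ 2 k, ← mul_assoc,
    Nat.mul_div_cancel _ two_pos]
  simp [mul_comm]

/-- (i) `Sym² V` — the space of homogeneous quadratic polynomials in the `2^g` variables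
`X_σ` — has dimension `2^{g-1}(2^g+1)`, and (ii) the quadrics `Q[ε,ε']` with `⟨ε,ε'⟩ = 0`
span it (there being `2^{g-1}(2^g+1)` of them up to the identification `ε' ∼ ε'+ε`). -/
theorem Qforms_span_sym2 (g : ℕ) (hg : 1 ≤ g) :
    Module.finrank ℂ (MvPolynomial.homogeneousSubmodule (Fin g → ZMod 2) ℂ 2) =
      2 ^ (g - 1) * (2 ^ g + 1) ∧
    Submodule.span ℂ
        {p : MvPolynomial (Fin g → ZMod 2) ℂ |
          ∃ ε ε' : Fin g → ZMod 2, (∑ i, ε i * ε' i = 0) ∧ p = Qform ε ε'} =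
      MvPolynomial.homogeneousSubmodule (Fin g → ZMod 2) ℂ 2 := by
  constructor
  · letI F : Fintype {d : (Fin g → ZMod 2) →₀ ℕ // d.degree = 2} :=
      Fintype.ofEquiv _ (degTwoEquivSym g).symm
    letI : Fintype ↑{d : (Fin g → ZMod 2) →₀ ℕ | d.degree = 2} := F
    have e1 : (homogeneousSubmodule (Fin g → ZMod 2) ℂ 2) ≃ₗ[ℂ]
        ({d : (Fin g → ZMod 2) →₀ ℕ | d.degree = 2} →₀ ℂ) :=
      (LinearEquiv.ofEq _ _ (homogeneousSubmodule_eq_finsupp_supported (Fin g → ZMod 2) ℂ 2)).trans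
        (AddMonoidAlgebra.supportedEquivFinsupp _)
    rw [e1.finrank_eq, Module.finrank_finsupp_self]
    exact card_degTwo g hg
  · apply le_antisymm
    · rw [Submodule.span_le]
      rintro p ⟨ε, ε', -, rfl⟩
      exact Qform_mem ε ε'
    · intro p hp
      rw [as_sum p]
      apply Submodule.sum_mem
      intro d hd
      have hdeg : d.degree = 2 := by
        rw [Finsupp.degree_eq_weight_one]
        exact (mem_homogeneousSubmodule 2 p).mp hp (mem_support_iff.mp hd)
      obtain ⟨σ, τ, h⟩ := monomial_eq_X_mul_X d hdeg
      rw [show (monomial d) (coeff d p) = (coeff d p) • (monomial d) (1:ℂ) from by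
        rw [smul_monomial, smul_eq_mul, mul_one]]
      exact Submodule.smul_mem _ _ (h ▸ X_mul_X_mem_span σ τ)
end

section
/- The addition formula for theta functions: θ[ε,δ](2τ,2z)·θ[ε+ε',δ](2τ,2w) = 2^{-g} Σ_{σ∈(Z/2)^g} (-1)^{⟨ε,σ⟩} θ[ε',δ+σ](τ,z+w)·θ[ε',σ](τ,z−w), for all ε,ε',δ ∈ {0,1}^g, τ ∈ H_g, z,w ∈ C^g. -/
/-! Both sides are absolutely convergent double series over `ℤ^g × ℤ^g`, since `Im τ` is
positive definite. On the right, shifting the characteristic `δ` by `σ` multiplies the `(a, b)`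
term by `(-1)^⟨a + b + ε', σ⟩`, so the character sum over `σ ∈ (ℤ/2)^g` keeps exactly the pairs
with `a + b ≡ ε + ε' (mod 2)`, each with weight `2^g`. These are the pairs
`(m + n + ε, m - n - ε')`, and for them the parallelogram law
`Q(x + y) + Q(x - y) = 2Q(x) + 2Q(y)` of the quadratic form of `τ`, applied to
`x = m + ε/2`, `y = n + (ε + ε')/2`, turns the product of the two `τ`-terms into the product of the
`2τ`-terms indexed by `m` and `n`. -/

open Complex

/-- A period matrix: a complex symmetric `g×g` matrix with positive definite
imaginary part (a point of the Siegel upper half-space `ℍ_g`). -/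
def IsPeriodMatrix {g : ℕ} (τ : Matrix (Fin g) (Fin g) ℂ) : Prop :=
  τ.IsSymm ∧ (Matrix.of fun i j => (τ i j).im).PosDef

/-- The first order theta function with characteristic `[ε,δ]`, `ε, δ ∈ ℤ^g`:
`θ[ε,δ](τ,z) = Σ_{m ∈ ℤ^g} exp(πi[(m+ε/2)ᵗ τ (m+ε/2) + 2(m+ε/2)ᵗ(z+δ/2)])`. -/
noncomputable def theta {g : ℕ} (ε δ : Fin g → ℤ) (τ : Matrix (Fin g) (Fin g) ℂ)
    (z : Fin g → ℂ) : ℂ :=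
  ∑' m : Fin g → ℤ,
    Complex.exp ((Real.pi : ℂ) * Complex.I *
      ((∑ i, ∑ j, ((m i : ℂ) + (ε i : ℂ) / 2) * τ i j * ((m j : ℂ) + (ε j : ℂ) / 2)) +
        2 * ∑ i, ((m i : ℂ) + (ε i : ℂ) / 2) * (z i + (δ i : ℂ) / 2)))

open Finset

theorem Matrix.PosDef.exists_pos_mul_sum_sq_le {ι : Type*} [Fintype ι] {Y : Matrix ι ι ℝ}
    (hY : Y.PosDef) :
    ∃ c > 0, ∀ v : ι → ℝ, c * ∑ i, v i ^ 2 ≤ ∑ i, ∑ j, v i * Y i j * v j := by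
  set Q : (ι → ℝ) → ℝ := fun v => ∑ i, ∑ j, v i * Y i j * v j
  rcases isEmpty_or_nonempty ι with _ | _
  · exact ⟨1, one_pos, fun v => by simp⟩
  have hQ_smul : ∀ (a : ℝ) v, Q (a • v) = a ^ 2 * Q v := fun a v => by
    simp only [Q, Pi.smul_apply, smul_eq_mul, mul_sum]
    exact sum_congr rfl fun i _ => sum_congr rfl fun j _ => by ring
  obtain ⟨u, hu, hmin⟩ := (isCompact_sphere (0 : ι → ℝ) 1).exists_isMinOn
    (NormedSpace.sphere_nonempty.2 zero_le_one) (by fun_prop : Continuous Q).continuousOn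
  have hu0 : u ≠ 0 := ne_zero_of_mem_unit_sphere ⟨u, hu⟩
  have hQu : 0 < Q u := by
    simpa [Q, dotProduct, Matrix.mulVec, mul_sum, mul_assoc, mul_comm, mul_left_comm]
      using hY.dotProduct_mulVec_pos hu0
  refine ⟨Q u / Fintype.card ι, by positivity, fun v => ?_⟩
  rcases eq_or_ne v 0 with rfl | hv
  · simp [Q]
  have hnv : 0 < ‖v‖ := norm_pos_iff.2 hv
  have hle : Q u ≤ Q (‖v‖⁻¹ • v) := hmin (by simp [norm_smul, hnv.ne'])
  rw [hQ_smul] at hle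
  have hsq : ∑ i, v i ^ 2 ≤ Fintype.card ι * ‖v‖ ^ 2 := by
    simpa using sum_le_card_nsmul univ (fun i => v i ^ 2) _ fun i _ => by
      simpa [sq_abs] using pow_le_pow_left₀ (abs_nonneg _) (norm_le_pi_norm v i) 2
  calc Q u / Fintype.card ι * ∑ i, v i ^ 2 ≤ Q u * ‖v‖ ^ 2 := by
        rw [div_mul_eq_mul_div, div_le_iff₀ (by positivity)]
        nlinarith
    _ ≤ Q v := by
        rw [inv_pow, inv_mul_eq_div, le_div_iff₀ (by positivity)] at hle
        exact hle

theorem summable_prod_apply_of_summable {ι κ : Type*} [Fintype ι] {f : ι → κ → ℝ}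
    (hf0 : ∀ i k, 0 ≤ f i k) (hf : ∀ i, Summable (f i)) :
    Summable fun m : ι → κ => ∏ i, f i (m i) := by
  classical
  refine summable_of_sum_le (c := ∏ i, ∑' k, f i k)
    (fun m => prod_nonneg fun i _ => hf0 i (m i)) fun s => ?_
  calc ∑ m ∈ s, ∏ i, f i (m i)
      ≤ ∑ m ∈ Fintype.piFinset fun i => s.image (· i), ∏ i, f i (m i) :=
        sum_le_sum_of_subset_of_nonneg
          (fun m hm => Fintype.mem_piFinset.2 fun i => mem_image_of_mem _ hm)
          fun m _ _ => prod_nonneg fun i _ => hf0 i (m i)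
    _ = ∏ i, ∑ k ∈ s.image (· i), f i k := (prod_univ_sum _ _).symm
    _ ≤ ∏ i, ∑' k, f i k :=
        prod_le_prod (fun i _ => sum_nonneg fun k _ => hf0 i k)
          fun i _ => (hf i).sum_le_tsum _ fun k _ => hf0 i k

theorem summable_exp_neg_mul_add_sq {T : ℝ} (hT : 0 < T) {S : ℝ} (hS : 0 ≤ S) (a : ℝ) :
    Summable fun n : ℤ => Real.exp (-Real.pi * (T * (n + a) ^ 2 - 2 * S * |n + a|)) := by
  refine ((summable_pow_mul_jacobiTheta₂_term_bound S (half_pos hT) 0).mul_left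
    (Real.exp (Real.pi * (T * a ^ 2 + 2 * S * |a|)))).of_nonneg_of_le
    (fun n => (Real.exp_pos _).le) fun n => ?_
  rw [pow_zero, one_mul, ← Real.exp_add, Real.exp_le_exp]
  have h1 : |(n : ℝ) + a| ≤ |(n : ℝ)| + |a| := abs_add_le _ _
  have h2 : T / 2 * (n : ℝ) ^ 2 ≤ T * (n + a) ^ 2 + T * a ^ 2 := by
    nlinarith [sq_nonneg ((n : ℝ) + 2 * a)]
  have key : T / 2 * (n : ℝ) ^ 2 - 2 * S * |(n : ℝ)| - (T * a ^ 2 + 2 * S * |a|) ≤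
      T * (n + a) ^ 2 - 2 * S * |n + a| := by
    nlinarith [mul_le_mul_of_nonneg_left h1 hS]
  rw [Int.cast_abs]
  nlinarith [mul_le_mul_of_nonneg_left key Real.pi_pos.le]

def parityPairs {ι : Type*} (ε ε' : ι → ℤ) : Set ((ι → ℤ) × (ι → ℤ)) :=
  {p | ∀ i, Even (ε i + ε' i + p.1 i + p.2 i)}

theorem tsum_indicator_parityPairs {ι α : Type*} [AddCommMonoid α] [TopologicalSpace α]
    (ε ε' : ι → ℤ) (f : (ι → ℤ) × (ι → ℤ) → α) :
    ∑' p, (parityPairs ε ε').indicator f p =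
      ∑' q : (ι → ℤ) × (ι → ℤ),
        f (fun i => q.1 i + q.2 i + ε i, fun i => q.1 i - q.2 i - ε' i) := by
  set e : (ι → ℤ) × (ι → ℤ) → (ι → ℤ) × (ι → ℤ) :=
    fun q => (fun i => q.1 i + q.2 i + ε i, fun i => q.1 i - q.2 i - ε' i)
  have he : Function.Injective e := by
    intro q q' h
    simp only [e, Prod.mk.injEq, funext_iff] at h
    ext i
    · have := h.1 i; have := h.2 i; omega
    · have := h.1 i; have := h.2 i; omega
  have hsupp : Function.support ((parityPairs ε ε').indicator f) ⊆ Set.range e := by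
    intro p hp
    choose k hk using Set.mem_of_indicator_ne_zero hp
    refine ⟨(fun i => k i - ε i, fun i => p.1 i - k i), ?_⟩
    ext i
    · simp only [e]; have := hk i; omega
    · simp only [e]; have := hk i; omega
  rw [← he.tsum_eq hsupp]
  refine tsum_congr fun q => Set.indicator_of_mem (fun i => ⟨q.1 i + ε i, ?_⟩) f
  simp only [e]
  ring

section

variable {ι : Type*} [Fintype ι]

noncomputable def thetaExp (τ : Matrix ι ι ℂ) (z x : ι → ℂ) : ℂ :=
  cexp (Real.pi * I * ((∑ i, ∑ j, x i * τ i j * x j) + 2 * ∑ i, x i * z i))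

theorem norm_thetaExp_ofReal (τ : Matrix ι ι ℂ) (z : ι → ℂ) (x : ι → ℝ) :
    ‖thetaExp τ z (fun i => x i)‖ = Real.exp
      (-Real.pi * ((∑ i, ∑ j, x i * (τ i j).im * x j) + 2 * ∑ i, x i * (z i).im)) := by
  simp [thetaExp, Complex.norm_exp, Complex.mul_re, Complex.mul_im, Complex.im_sum, Complex.re_sum]

theorem summable_norm_thetaExp {τ : Matrix ι ι ℂ} (hτ : (τ.map im).PosDef)
    (z : ι → ℂ) (a : ι → ℝ) :
    Summable fun m : ι → ℤ => ‖thetaExp τ z (fun i => m i + a i)‖ := by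
  obtain ⟨c, hc, hQ⟩ := hτ.exists_pos_mul_sum_sq_le
  refine (summable_prod_apply_of_summable (fun i k => (Real.exp_pos _).le) fun i =>
    summable_exp_neg_mul_add_sq hc (abs_nonneg (z i).im) (a i)).of_nonneg_of_le
    (fun m => norm_nonneg _) fun m => ?_
  set x : ι → ℝ := fun i => m i + a i
  have hx : (fun i => (m i : ℂ) + a i) = fun i => ((x i : ℝ) : ℂ) := by
    ext i; push_cast [x]; rfl
  have hlin : -∑ i, x i * (z i).im ≤ ∑ i, |(z i).im| * |x i| := by
    rw [← sum_neg_distrib]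
    exact sum_le_sum fun i _ => by rw [← abs_mul, mul_comm]; exact neg_le_abs _
  have hquad := hQ x
  simp only [Matrix.map_apply] at hquad
  rw [hx, norm_thetaExp_ofReal, ← Real.exp_sum, Real.exp_le_exp]
  have hsum : ∑ i, -Real.pi * (c * x i ^ 2 - 2 * |(z i).im| * |x i|) =
      -Real.pi * (c * ∑ i, x i ^ 2 - 2 * ∑ i, |(z i).im| * |x i|) := by
    simp only [mul_sum, ← sum_sub_distrib, mul_assoc]
  rw [hsum]
  nlinarith [Real.pi_pos]

theorem thetaExp_add_right (τ : Matrix ι ι ℂ) (z s x : ι → ℂ) :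
    thetaExp τ (z + s) x = thetaExp τ z x * cexp (2 * Real.pi * I * ∑ i, x i * s i) := by
  simp only [thetaExp, ← Complex.exp_add, Pi.add_apply, mul_add, sum_add_distrib]
  ring_nf

theorem thetaExp_add_mul_thetaExp_sub (τ : Matrix ι ι ℂ) (u v x y : ι → ℂ) :
    thetaExp τ u (x + y) * thetaExp τ v (x - y) =
      thetaExp ((2 : ℂ) • τ) (u + v) x * thetaExp ((2 : ℂ) • τ) (u - v) y := by
  have hquad : (∑ i, ∑ j, (x + y) i * τ i j * (x + y) j) +
      ∑ i, ∑ j, (x - y) i * τ i j * (x - y) j =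
      (∑ i, ∑ j, x i * ((2 : ℂ) • τ) i j * x j) +
        ∑ i, ∑ j, y i * ((2 : ℂ) • τ) i j * y j := by
    simp only [← sum_add_distrib]
    refine sum_congr rfl fun i _ => sum_congr rfl fun j _ => ?_
    simp only [Pi.add_apply, Pi.sub_apply, Matrix.smul_apply, smul_eq_mul]
    ring
  have hlin : (∑ i, (x + y) i * u i) + ∑ i, (x - y) i * v i =
      (∑ i, x i * (u + v) i) + ∑ i, y i * (u - v) i := by
    simp only [← sum_add_distrib]
    refine sum_congr rfl fun i _ => ?_
    simp only [Pi.add_apply, Pi.sub_apply]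
    ring
  simp only [thetaExp, ← Complex.exp_add]
  congr 1
  linear_combination Real.pi * I * (hquad + 2 * hlin)

theorem neg_one_zpow_eq_exp (n : ℤ) : (-1 : ℂ) ^ n = cexp (Real.pi * I * n) := by
  rw [mul_comm, Complex.exp_int_mul, Complex.exp_pi_mul_I]

theorem sum_neg_one_zpow_sum_mul_val [DecidableEq ι] (c : ι → ℤ) :
    ∑ σ : ι → ZMod 2, (-1 : ℂ) ^ (∑ i, c i * ((σ i).val : ℤ)) =
      if ∀ i, Even (c i) then 2 ^ Fintype.card ι else 0 := by
  have hfactor : ∀ σ : ι → ZMod 2, (-1 : ℂ) ^ (∑ i, c i * ((σ i).val : ℤ)) =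
      ∏ i, (-1 : ℂ) ^ (c i * ((σ i).val : ℤ)) := fun σ => by
    simp only [neg_one_zpow_eq_exp, Int.cast_sum, mul_sum, Complex.exp_sum]
  have hsum : ∀ n : ℤ,
      ∑ s : ZMod 2, (-1 : ℂ) ^ (n * (s.val : ℤ)) = if Even n then 2 else 0 := by
    intro n
    rw [show (univ : Finset (ZMod 2)) = {0, 1} from rfl, sum_pair (by decide)]
    simp only [ZMod.val_zero, ZMod.val_one, Nat.cast_zero, Nat.cast_one, mul_zero, mul_one,
      zpow_zero]
    rcases Int.even_or_odd n with hn | hn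
    · rw [hn.neg_one_zpow, if_pos hn]; norm_num
    · rw [hn.neg_one_zpow, if_neg (Int.not_even_iff_odd.2 hn)]; norm_num
  simp only [hfactor]
  rw [← Fintype.prod_sum (fun i (s : ZMod 2) => (-1 : ℂ) ^ (c i * (s.val : ℤ)))]
  simp only [hsum, Fintype.prod_ite_zero, prod_const, card_univ]

theorem thetaExp_half_shift_mul (τ : Matrix ι ι ℂ) (u v x y : ι → ℂ) (k s : ι → ℤ)
    (hk : ∀ i, x i + y i = k i) :
    thetaExp τ (fun i => u i + s i / 2) x * thetaExp τ (fun i => v i + s i / 2) y =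
      (-1 : ℂ) ^ (∑ i, k i * s i) * (thetaExp τ u x * thetaExp τ v y) := by
  have hchar : cexp (2 * Real.pi * I * ∑ i, x i * (s i / 2)) *
      cexp (2 * Real.pi * I * ∑ i, y i * (s i / 2)) = (-1 : ℂ) ^ (∑ i, k i * s i) := by
    rw [← Complex.exp_add, neg_one_zpow_eq_exp]
    congr 1
    push_cast
    simp only [mul_sum, ← sum_add_distrib]
    refine sum_congr rfl fun i _ => ?_
    rw [← hk i]
    ring
  rw [show (fun i => u i + (s i : ℂ) / 2) = u + fun i => (s i : ℂ) / 2 from rfl,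
    show (fun i => v i + (s i : ℂ) / 2) = v + fun i => (s i : ℂ) / 2 from rfl,
    thetaExp_add_right, thetaExp_add_right, ← hchar]
  ring

end

section

variable {g : ℕ}

theorem theta_eq_tsum_thetaExp (ε δ : Fin g → ℤ) (τ : Matrix (Fin g) (Fin g) ℂ)
    (z : Fin g → ℂ) :
    theta ε δ τ z =
      ∑' m : Fin g → ℤ, thetaExp τ (fun i => z i + δ i / 2) (fun i => m i + ε i / 2) :=
  rfl

theorem summable_norm_theta_summand {τ : Matrix (Fin g) (Fin g) ℂ} (hτ : (τ.map im).PosDef)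
    (z : Fin g → ℂ) (ε : Fin g → ℤ) :
    Summable fun m : Fin g → ℤ => ‖thetaExp τ z (fun i => m i + ε i / 2)‖ := by
  simpa using summable_norm_thetaExp hτ z (fun i => (ε i : ℝ) / 2)

theorem hasSum_theta_mul_theta {τ τ' : Matrix (Fin g) (Fin g) ℂ} (hτ : (τ.map im).PosDef)
    (hτ' : (τ'.map im).PosDef) (ε δ ε' δ' : Fin g → ℤ) (z z' : Fin g → ℂ) :
    HasSum (fun p : (Fin g → ℤ) × (Fin g → ℤ) =>
        thetaExp τ (fun i => z i + δ i / 2) (fun i => p.1 i + ε i / 2) *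
          thetaExp τ' (fun i => z' i + δ' i / 2) (fun i => p.2 i + ε' i / 2))
      (theta ε δ τ z * theta ε' δ' τ' z') := by
  have h := summable_norm_theta_summand hτ (fun i => z i + δ i / 2) ε
  have h' := summable_norm_theta_summand hτ' (fun i => z' i + δ' i / 2) ε'
  rw [theta_eq_tsum_thetaExp, theta_eq_tsum_thetaExp, tsum_mul_tsum_of_summable_norm h h']
  exact (summable_mul_of_summable_norm h h').hasSum

theorem theta_two_smul_mul_theta_two_smul {τ : Matrix (Fin g) (Fin g) ℂ}
    (hτ : (τ.map im).PosDef) (ε ε' δ : Fin g → ℤ) (z w : Fin g → ℂ) :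
    theta ε δ ((2 : ℂ) • τ) (fun i => 2 * z i) *
        theta (ε + ε') δ ((2 : ℂ) • τ) (fun i => 2 * w i) =
      ∑' q : (Fin g → ℤ) × (Fin g → ℤ),
        thetaExp τ (fun i => z i + w i + δ i / 2)
            (fun i => (q.1 i + q.2 i + ε i : ℤ) + ε' i / 2) *
          thetaExp τ (fun i => z i - w i)
            (fun i => (q.1 i - q.2 i - ε' i : ℤ) + ε' i / 2) := by
  have h2τ : (((2 : ℂ) • τ).map im).PosDef := by
    convert hτ.smul (two_pos : (0 : ℝ) < 2) using 1
    ext i j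
    simp
  refine ((hasSum_theta_mul_theta h2τ h2τ ε δ (ε + ε') δ _ _).tsum_eq.symm.trans
    (tsum_congr fun q => ?_))
  convert (thetaExp_add_mul_thetaExp_sub τ (fun i => z i + w i + δ i / 2) (fun i => z i - w i)
    (fun i => q.1 i + ε i / 2) (fun i => q.2 i + (ε + ε') i / 2)).symm using 3 <;>
  · ext i
    simp only [Pi.add_apply, Pi.sub_apply]
    push_cast
    ring

theorem sum_neg_one_zpow_mul_theta_mul_theta {τ : Matrix (Fin g) (Fin g) ℂ}
    (hτ : (τ.map im).PosDef) (ε ε' δ : Fin g → ℤ) (u v : Fin g → ℂ) :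
    ∑ σ : Fin g → ZMod 2, (-1 : ℂ) ^ (∑ i, ε i * ((σ i).val : ℤ)) *
        theta ε' (δ + fun i => ((σ i).val : ℤ)) τ u *
          theta ε' (fun i => ((σ i).val : ℤ)) τ v =
      2 ^ g * ∑' q : (Fin g → ℤ) × (Fin g → ℤ),
        thetaExp τ (fun i => u i + δ i / 2) (fun i => (q.1 i + q.2 i + ε i : ℤ) + ε' i / 2) *
          thetaExp τ v (fun i => (q.1 i - q.2 i - ε' i : ℤ) + ε' i / 2) := by
  set A : (Fin g → ℤ) × (Fin g → ℤ) → ℂ := fun p =>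
    thetaExp τ (fun i => u i + δ i / 2) (fun i => p.1 i + ε' i / 2) *
      thetaExp τ v (fun i => p.2 i + ε' i / 2)
  have hterm : ∀ (σ : Fin g → ZMod 2) (p : (Fin g → ℤ) × (Fin g → ℤ)),
      (-1 : ℂ) ^ (∑ i, ε i * ((σ i).val : ℤ)) *
        (thetaExp τ (fun i => u i + ((δ + fun i => ((σ i).val : ℤ)) i : ℤ) / 2)
            (fun i => p.1 i + ε' i / 2) *
          thetaExp τ (fun i => v i + (((σ i).val : ℤ) : ℂ) / 2)
            (fun i => p.2 i + ε' i / 2)) =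
      (-1 : ℂ) ^ (∑ i, (ε i + ε' i + p.1 i + p.2 i) * ((σ i).val : ℤ)) * A p := by
    intro σ p
    have hu : (fun i => u i + (((δ + fun i => ((σ i).val : ℤ)) i : ℤ) : ℂ) / 2) =
        fun i => (u i + δ i / 2) + (((σ i).val : ℤ) : ℂ) / 2 := by
      ext i
      simp only [Pi.add_apply]
      push_cast
      ring
    rw [hu, thetaExp_half_shift_mul τ _ _ _ _ (fun i => p.1 i + p.2 i + ε' i) _
      fun i => by push_cast; ring, ← mul_assoc, ← zpow_add₀ (by norm_num),
      ← sum_add_distrib]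
    congr 3 with i
    ring
  calc ∑ σ : Fin g → ZMod 2, (-1 : ℂ) ^ (∑ i, ε i * ((σ i).val : ℤ)) *
        theta ε' (δ + fun i => ((σ i).val : ℤ)) τ u *
          theta ε' (fun i => ((σ i).val : ℤ)) τ v
      = ∑ σ : Fin g → ZMod 2, ∑' p,
          (-1 : ℂ) ^ (∑ i, (ε i + ε' i + p.1 i + p.2 i) * ((σ i).val : ℤ)) * A p := by
        refine sum_congr rfl fun σ _ => ?_
        rw [mul_assoc, ← (hasSum_theta_mul_theta hτ hτ _ _ _ _ u v).tsum_eq, ← tsum_mul_left]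
        exact tsum_congr (hterm σ)
    _ = ∑' p, ∑ σ : Fin g → ZMod 2,
          (-1 : ℂ) ^ (∑ i, (ε i + ε' i + p.1 i + p.2 i) * ((σ i).val : ℤ)) * A p := by
        refine (Summable.tsum_finsetSum fun σ _ => ?_).symm
        exact ((hasSum_theta_mul_theta hτ hτ _ _ _ _ u v).summable.mul_left _).congr (hterm σ)
    _ = 2 ^ g * ∑' p, (parityPairs ε ε').indicator A p := by
        classical
        rw [← tsum_mul_left]
        refine tsum_congr fun p => ?_
        rw [← sum_mul, sum_neg_one_zpow_sum_mul_val, Fintype.card_fin, Set.indicator_apply]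
        by_cases h : ∀ i, Even (ε i + ε' i + p.1 i + p.2 i) <;> simp [parityPairs, h]
    _ = _ := by rw [tsum_indicator_parityPairs ε ε' A]

end

theorem theta_addition_formula_general (g : ℕ) (ε ε' δ : Fin g → ℤ)
    (τ : Matrix (Fin g) (Fin g) ℂ) (hτ : IsPeriodMatrix τ) (z w : Fin g → ℂ) :
    theta ε δ ((2 : ℂ) • τ) (fun i => 2 * z i) *
        theta (ε + ε') δ ((2 : ℂ) • τ) (fun i => 2 * w i) =
      (1 / 2 ^ g : ℂ) *
        ∑ σ : Fin g → ZMod 2,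
          (-1 : ℂ) ^ (∑ i, ε i * ((σ i).val : ℤ)) *
            theta ε' (δ + fun i => ((σ i).val : ℤ)) τ (fun i => z i + w i) *
            theta ε' (fun i => ((σ i).val : ℤ)) τ (fun i => z i - w i) := by
  rw [sum_neg_one_zpow_mul_theta_mul_theta hτ.2, ← mul_assoc, one_div_mul_cancel (by simp),
    one_mul, theta_two_smul_mul_theta_two_smul hτ.2]

/-- Riemann's addition formula for theta functions: for `ε, ε', δ ∈ {0,1}^g`,
`θ[ε,δ](2τ,2z)·θ[ε+ε',δ](2τ,2w) = 2^{-g} Σ_{σ∈{0,1}^g} (-1)^{⟨ε,σ⟩}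
θ[ε',δ+σ](τ,z+w)·θ[ε',σ](τ,z−w)`. -/
theorem theta_addition_formula (g : ℕ) (ε ε' δ : Fin g → ℤ)
    (hε : ∀ i, ε i = 0 ∨ ε i = 1) (hε' : ∀ i, ε' i = 0 ∨ ε' i = 1)
    (hδ : ∀ i, δ i = 0 ∨ δ i = 1)
    (τ : Matrix (Fin g) (Fin g) ℂ) (hτ : IsPeriodMatrix τ) (z w : Fin g → ℂ) :
    theta ε δ ((2 : ℂ) • τ) (fun i => 2 * z i) *
        theta (ε + ε') δ ((2 : ℂ) • τ) (fun i => 2 * w i) =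
      (1 / 2 ^ g : ℂ) *
        ∑ σ : Fin g → ZMod 2,
          (-1 : ℂ) ^ (∑ i, ε i * ((σ i).val : ℤ)) *
            theta ε' (δ + fun i => ((σ i).val : ℤ)) τ (fun i => z i + w i) *
            theta ε' (fun i => ((σ i).val : ℤ)) τ (fun i => z i - w i) :=
  theta_addition_formula_general g ε ε' δ τ hτ z w
end
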